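/- arXiv:2504.19751 — 2 statements merged into one kernel-verified Lean document; each statement's English description precedes it below -/
import Mathlib

section
/- Let T be a tree-decomposition of a graph G, and let A be an independent set of G that is not contained in any bag. Then there exists an edge t₁t₂ of the decomposition tree splitting it into subtrees T₁, T₂ and a partition A = A₁ ∪ A₂ ∪ A₃ with |A₁|, |A₂| ≥ 1, vertices of A₁ appearing only in bags of T₁, vertices of A₂ appearing only in bags of T₂, and vertices of A₃ appearing in bags of both; moreover A₃ ⊆ X_{t₁} ∩ X_{t₂}. -/
open SimpleGraph

structure TreeDecomp {V : Type} (G : SimpleGraph V) where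
  ι : Type
  tree : SimpleGraph ι
  isTree : tree.IsTree
  bag : ι → Finset V
  covers_edge : ∀ ⦃u v : V⦄, G.Adj u v → ∃ t, u ∈ bag t ∧ v ∈ bag t
  support_connected : ∀ v : V, (tree.induce {t | v ∈ bag t}).Connected

noncomputable def indepNum {V : Type} (G : SimpleGraph V) (s : Set V) : ℕ :=
  sSup {n | ∃ t : Finset V, ↑t ⊆ s ∧ (↑t : Set V).Pairwise (fun a b => ¬ G.Adj a b) ∧ t.card = n}

noncomputable def alpha {V : Type} (G : SimpleGraph V) : ℕ := indepNum G Set.univ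

noncomputable def chiNat {V : Type} (G : SimpleGraph V) : ℕ := G.chromaticNumber.toNat

noncomputable def tw {V : Type} (G : SimpleGraph V) : ℕ :=
  sInf {w | ∃ D : TreeDecomp G, ∀ t, (D.bag t).card ≤ w + 1}

noncomputable def treeAlpha {V : Type} (G : SimpleGraph V) : ℕ :=
  sInf {k | ∃ D : TreeDecomp G, ∀ t, indepNum G ↑(D.bag t) ≤ k}

noncomputable def treeChi {V : Type} (G : SimpleGraph V) : ℕ :=
  sInf {k | ∃ D : TreeDecomp G, ∀ t, chiNat (G.induce ↑(D.bag t)) ≤ k}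

noncomputable def treeTw {V : Type} (G : SimpleGraph V) : ℕ :=
  sInf {k | ∃ D : TreeDecomp G, ∀ t, tw (G.induce ↑(D.bag t)) ≤ k}

noncomputable def omegaNum {V : Type} (G : SimpleGraph V) : ℕ :=
  sSup {n | ∃ t : Finset V, G.IsClique ↑t ∧ t.card = n}

def completion {V : Type} (H : SimpleGraph V) :
    SimpleGraph (V ⊕ {p : Sym2 V // ¬ p.IsDiag ∧ p ∉ H.edgeSet}) :=
  SimpleGraph.fromRel (fun x y =>
    match x, y with
    | .inl u, .inl v => H.Adj u v
    | .inl u, .inr p => u ∈ p.1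
    | _, _ => False)

/-!
Take a bag `X t` meeting `A` in as many vertices as possible and some `a ∈ A \ X t`, and walk along
the tree path from `t` to a bag containing `a`. Every bag containing `a` lies beyond the current
edge `ts`. If some vertex of `A` has all its bags on the side of `t`, the edge `ts` splits `A`;
otherwise every vertex of `A ∩ X t` also has a bag beyond `ts`, hence lies in `X s`, and by
maximality `A ∩ X s = A ∩ X t`, so `a ∉ X s` and the walk continues from `s`. It cannot reach a bag
containing `a` this way, so some edge splits `A`.
-/

namespace SimpleGraph

variable {ι : Type} {T : SimpleGraph ι}

theorem Walk.exists_mem_reachable_deleteEdges {t z : ι} {e : Sym2 ι} (w : T.Walk t z)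
    (hz : z ∈ e) : ∃ a ∈ e, (T.deleteEdges {e}).Reachable t a := by
  induction w with
  | nil => exact ⟨_, hz, .rfl⟩
  | @cons t u _ htu _ ih =>
    by_cases he : s(t, u) = e
    · exact ⟨t, he ▸ Sym2.mem_mk_left t u, .rfl⟩
    · have hadj : (T.deleteEdges {e}).Adj t u := by
        simpa [deleteEdges_adj] using And.intro htu he
      obtain ⟨a, ha, hua⟩ := ih hz
      exact ⟨a, ha, hadj.reachable.trans hua⟩

theorem Preconnected.reachable_deleteEdges_or (hT : T.Preconnected) (x y t : ι) :
    (T.deleteEdges {s(x, y)}).Reachable t x ∨ (T.deleteEdges {s(x, y)}).Reachable t y := by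
  obtain ⟨w⟩ := hT t x
  obtain ⟨a, ha, hta⟩ := w.exists_mem_reachable_deleteEdges (Sym2.mem_mk_left x y)
  rcases Sym2.mem_iff.1 ha with rfl | rfl
  exacts [Or.inl hta, Or.inr hta]

theorem mem_and_mem_of_reachable_induce {S : Set ι} {a b : S} {x y : ι}
    (hab : (T.induce S).Reachable a b) (hsep : ¬ (T.deleteEdges {s(x, y)}).Reachable a b) :
    x ∈ S ∧ y ∈ S := by
  obtain ⟨w⟩ := hab
  have hxy := (w.map (Embedding.induce S).toHom).mem_edges_of_not_reachable_deleteEdges hsep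
  rw [Walk.edges_map, List.mem_map] at hxy
  obtain ⟨e, -, he⟩ := hxy
  induction e using Sym2.ind with
  | h c d =>
    rcases Sym2.eq_iff.1 he with ⟨rfl, rfl⟩ | ⟨rfl, rfl⟩
    exacts [⟨c.2, d.2⟩, ⟨d.2, c.2⟩]

end SimpleGraph

namespace TreeDecomp

open SimpleGraph Finset

variable {V : Type} {G : SimpleGraph V} (D : TreeDecomp G)

theorem exists_mem_bag (v : V) : ∃ t, v ∈ D.bag t :=
  let ⟨⟨t, ht⟩⟩ := (D.support_connected v).nonempty
  ⟨t, ht⟩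

theorem not_reachable_deleteEdges_of_adj {t₁ t₂ : D.ι} (hadj : D.tree.Adj t₁ t₂) :
    ¬ (D.tree.deleteEdges {s(t₁, t₂)}).Reachable t₁ t₂ :=
  isBridge_iff.1 (isAcyclic_iff_forall_adj_isBridge.1 D.isTree.isAcyclic hadj)

theorem mem_bag_of_reachable_of_reachable {t₁ t₂ u u' : D.ι} (hadj : D.tree.Adj t₁ t₂) {v : V}
    (hu : v ∈ D.bag u) (hu' : v ∈ D.bag u')
    (hut : (D.tree.deleteEdges {s(t₁, t₂)}).Reachable u t₁)
    (hut' : (D.tree.deleteEdges {s(t₁, t₂)}).Reachable u' t₂) :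
    v ∈ D.bag t₁ ∧ v ∈ D.bag t₂ :=
  mem_and_mem_of_reachable_induce (S := {t | v ∈ D.bag t}) (a := ⟨u, hu⟩) (b := ⟨u', hu'⟩)
    ((D.support_connected v).preconnected _ _)
    fun huu' ↦ D.not_reachable_deleteEdges_of_adj hadj (hut.symm.trans (huu'.trans hut'))

theorem mem_bag_of_not_reachable {t s u : D.ι} (hadj : D.tree.Adj t s) {v : V}
    (ht : v ∈ D.bag t) (hu : v ∈ D.bag u)
    (hut : ¬ (D.tree.deleteEdges {s(t, s)}).Reachable u t) : v ∈ D.bag s :=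
  (D.mem_bag_of_reachable_of_reachable hadj ht hu .rfl
    ((D.isTree.connected.preconnected.reachable_deleteEdges_or t s u).resolve_left hut)).2

variable [DecidableEq V]

def SplitsAlong (A : Finset V) (t₁ t₂ : D.ι) : Prop :=
  ∃ A₁ A₂ A₃ : Finset V, A = A₁ ∪ A₂ ∪ A₃ ∧
    Disjoint A₁ A₂ ∧ Disjoint A₁ A₃ ∧ Disjoint A₂ A₃ ∧
    A₁.Nonempty ∧ A₂.Nonempty ∧
    (∀ v ∈ A₁, ∀ t, v ∈ D.bag t → (D.tree.deleteEdges {s(t₁, t₂)}).Reachable t t₁) ∧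
    (∀ v ∈ A₂, ∀ t, v ∈ D.bag t → (D.tree.deleteEdges {s(t₁, t₂)}).Reachable t t₂) ∧
    (∀ v ∈ A₃,
      (∃ t, v ∈ D.bag t ∧ (D.tree.deleteEdges {s(t₁, t₂)}).Reachable t t₁) ∧
      (∃ t, v ∈ D.bag t ∧ (D.tree.deleteEdges {s(t₁, t₂)}).Reachable t t₂)) ∧
    (∀ v ∈ A₃, v ∈ D.bag t₁ ∧ v ∈ D.bag t₂)

theorem splitsAlong_of_mem_of_mem {A : Finset V} {t₁ t₂ : D.ι} (hadj : D.tree.Adj t₁ t₂)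
    {a b : V} (ha : a ∈ A) (hb : b ∈ A)
    (ha₁ : ∀ t, a ∈ D.bag t → (D.tree.deleteEdges {s(t₁, t₂)}).Reachable t t₁)
    (hb₂ : ∀ t, b ∈ D.bag t → (D.tree.deleteEdges {s(t₁, t₂)}).Reachable t t₂) :
    D.SplitsAlong A t₁ t₂ := by
  classical
  set side : D.ι → V → Prop :=
    fun r v ↦ ∀ t, v ∈ D.bag t → (D.tree.deleteEdges {s(t₁, t₂)}).Reachable t r
  have not_side₂ : ∀ v, side t₁ v → ¬ side t₂ v := fun v h₁ h₂ ↦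
    let ⟨t, ht⟩ := D.exists_mem_bag v
    D.not_reachable_deleteEdges_of_adj hadj ((h₁ t ht).symm.trans (h₂ t ht))
  have meets_both : ∀ v, ¬ side t₁ v → ¬ side t₂ v →
      (∃ t, v ∈ D.bag t ∧ (D.tree.deleteEdges {s(t₁, t₂)}).Reachable t t₁) ∧
      (∃ t, v ∈ D.bag t ∧ (D.tree.deleteEdges {s(t₁, t₂)}).Reachable t t₂) := by
    intro v h₁ h₂
    simp only [side, not_forall] at h₁ h₂
    obtain ⟨t, ht, hnt⟩ := h₁
    obtain ⟨t', ht', hnt'⟩ := h₂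
    have hsides := D.isTree.connected.preconnected.reachable_deleteEdges_or t₁ t₂
    exact ⟨⟨t', ht', (hsides t').resolve_right hnt'⟩, ⟨t, ht, (hsides t).resolve_left hnt⟩⟩
  refine ⟨A.filter (side t₁), A.filter (side t₂), A.filter fun v ↦ ¬ side t₁ v ∧ ¬ side t₂ v,
    ?_, disjoint_filter.2 fun v _ ↦ not_side₂ v, disjoint_filter.2 fun v _ h h' ↦ h'.1 h,
    disjoint_filter.2 fun v _ h h' ↦ h'.2 h, ⟨a, mem_filter.2 ⟨ha, ha₁⟩⟩,
    ⟨b, mem_filter.2 ⟨hb, hb₂⟩⟩, fun v hv ↦ (mem_filter.1 hv).2, fun v hv ↦ (mem_filter.1 hv).2,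
    fun v hv ↦ meets_both v (mem_filter.1 hv).2.1 (mem_filter.1 hv).2.2, fun v hv ↦ ?_⟩
  · ext v
    simp only [mem_union, mem_filter]
    tauto
  · obtain ⟨⟨t, ht, htt₁⟩, ⟨t', ht', ht't₂⟩⟩ :=
      meets_both v (mem_filter.1 hv).2.1 (mem_filter.1 hv).2.2
    exact D.mem_bag_of_reachable_of_reachable hadj ht ht' htt₁ ht't₂

theorem exists_splitsAlong_of_isPath {A : Finset V} {a : V} (ha : a ∈ A) {t s : D.ι}
    (p : D.tree.Walk t s) (hp : p.IsPath) (has : a ∈ D.bag s) (hat : a ∉ D.bag t)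
    (hmax : ∀ u, #(A.filter (· ∈ D.bag u)) ≤ #(A.filter (· ∈ D.bag t))) :
    ∃ t₁ t₂, D.tree.Adj t₁ t₂ ∧ D.SplitsAlong A t₁ t₂ := by
  induction p with
  | nil => exact absurd has hat
  | @cons t s _ hadj w ih =>
    rw [Walk.cons_isPath_iff] at hp
    have hw : s(t, s) ∉ w.edges := fun he ↦ hp.2 (w.fst_mem_support_of_mem_edges he)
    have ha_side : ∀ u, a ∈ D.bag u → (D.tree.deleteEdges {s(t, s)}).Reachable u s :=
      fun u hu ↦ (D.isTree.connected.preconnected.reachable_deleteEdges_or t s u).resolve_left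
        fun hut ↦ hat (D.mem_bag_of_reachable_of_reachable hadj hu has hut
          (reachable_deleteEdges_iff_exists_walk.2 ⟨w, hw⟩).symm).1
    by_cases hb : ∃ b ∈ A, ∀ u, b ∈ D.bag u → (D.tree.deleteEdges {s(t, s)}).Reachable u t
    · obtain ⟨b, hbA, hb⟩ := hb
      exact ⟨t, s, hadj, D.splitsAlong_of_mem_of_mem hadj hbA ha hb ha_side⟩
    · push Not at hb
      have hsub : A.filter (· ∈ D.bag t) ⊆ A.filter (· ∈ D.bag s) := fun v hv ↦ by
        obtain ⟨hvA, hvt⟩ := mem_filter.1 hv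
        obtain ⟨u, hvu, hut⟩ := hb v hvA
        exact mem_filter.2 ⟨hvA, D.mem_bag_of_not_reachable hadj hvt hvu hut⟩
      have heq := eq_of_subset_of_card_le hsub (hmax s)
      refine ih hp.1 has (fun has' ↦ hat ?_) (heq ▸ hmax)
      exact (mem_filter.1 (heq ▸ mem_filter.2 ⟨ha, has'⟩)).2

theorem exists_splitsAlong {A : Finset V} (hA : ¬ ∃ t, A ⊆ D.bag t) :
    ∃ t₁ t₂, D.tree.Adj t₁ t₂ ∧ D.SplitsAlong A t₁ t₂ := by
  have : Nonempty D.ι := D.isTree.connected.nonempty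
  set count : D.ι → ℕ := fun u ↦ #(A.filter (· ∈ D.bag u))
  have hbdd : BddAbove (Set.range count) := ⟨#A, by rintro _ ⟨u, rfl⟩; exact card_filter_le _ _⟩
  obtain ⟨t, ht⟩ := Nat.sSup_mem (Set.range_nonempty count) hbdd
  have hmax : ∀ u, count u ≤ count t := fun u ↦ ht ▸ le_csSup hbdd ⟨u, rfl⟩
  obtain ⟨a, ha, hat⟩ : ∃ a ∈ A, a ∉ D.bag t := by
    simpa [not_subset] using fun h ↦ hA ⟨t, h⟩
  obtain ⟨s, has⟩ := D.exists_mem_bag a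
  obtain ⟨p, hp⟩ := D.isTree.connected.preconnected.exists_isPath t s
  exact D.exists_splitsAlong_of_isPath ha p hp has hat hmax

end TreeDecomp

theorem stmt9_general {V : Type} [DecidableEq V] (G : SimpleGraph V) (D : TreeDecomp G)
    (A : Finset V) (hnb : ¬ ∃ t, A ⊆ D.bag t) :
    ∃ t₁ t₂, D.tree.Adj t₁ t₂ ∧
      ∃ A₁ A₂ A₃ : Finset V, A = A₁ ∪ A₂ ∪ A₃ ∧
        Disjoint A₁ A₂ ∧ Disjoint A₁ A₃ ∧ Disjoint A₂ A₃ ∧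
        A₁.Nonempty ∧ A₂.Nonempty ∧
        (∀ v ∈ A₁, ∀ t, v ∈ D.bag t →
          (D.tree.deleteEdges {s(t₁, t₂)}).Reachable t t₁) ∧
        (∀ v ∈ A₂, ∀ t, v ∈ D.bag t →
          (D.tree.deleteEdges {s(t₁, t₂)}).Reachable t t₂) ∧
        (∀ v ∈ A₃,
          (∃ t, v ∈ D.bag t ∧ (D.tree.deleteEdges {s(t₁, t₂)}).Reachable t t₁) ∧
          (∃ t, v ∈ D.bag t ∧ (D.tree.deleteEdges {s(t₁, t₂)}).Reachable t t₂)) ∧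
        (∀ v ∈ A₃, v ∈ D.bag t₁ ∧ v ∈ D.bag t₂) :=
  D.exists_splitsAlong hnb

theorem stmt9 {V : Type} [DecidableEq V] (G : SimpleGraph V) (D : TreeDecomp G)
    (A : Finset V) (hA : (↑A : Set V).Pairwise fun a b => ¬ G.Adj a b)
    (hnb : ¬ ∃ t, A ⊆ D.bag t) :
    ∃ t₁ t₂, D.tree.Adj t₁ t₂ ∧
      ∃ A₁ A₂ A₃ : Finset V, A = A₁ ∪ A₂ ∪ A₃ ∧
        Disjoint A₁ A₂ ∧ Disjoint A₁ A₃ ∧ Disjoint A₂ A₃ ∧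
        A₁.Nonempty ∧ A₂.Nonempty ∧
        (∀ v ∈ A₁, ∀ t, v ∈ D.bag t →
          (D.tree.deleteEdges {s(t₁, t₂)}).Reachable t t₁) ∧
        (∀ v ∈ A₂, ∀ t, v ∈ D.bag t →
          (D.tree.deleteEdges {s(t₁, t₂)}).Reachable t t₂) ∧
        (∀ v ∈ A₃,
          (∃ t, v ∈ D.bag t ∧ (D.tree.deleteEdges {s(t₁, t₂)}).Reachable t t₁) ∧
          (∃ t, v ∈ D.bag t ∧ (D.tree.deleteEdges {s(t₁, t₂)}).Reachable t t₂)) ∧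
        (∀ v ∈ A₃, v ∈ D.bag t₁ ∧ v ∈ D.bag t₂) :=
  stmt9_general G D A hnb
end

section
/- If H is a graph with |V(H)| ≥ 3, then α(H) − 1 ≤ tree-α(C(H)) ≤ α(H), where C(H) is the 1-completion of H. -/
open SimpleGraph

/-!
Upper bound: the star decomposition of `completion H` whose centre bag is `V` and which has, for
every subdivision vertex `p` of a non-edge `ab`, a leaf bag `{a, b, p}`; an independent set of a
leaf bag has at most two vertices, and `a, b` already form one in `H`.

Lower bound: let `A` be a maximum independent set of `H`. The subtrees of a tree decomposition
carrying the vertices of `A` either share a node, whose bag then contains `A`, or two of them, for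
`u` and `v`, lie on opposite sides of a tree edge `xy`. In the latter case every path of
`completion H` from `u` to `v` meets the bag at `x`; so that bag contains the subdivision vertex of
`uv` and, for every other `w ∈ A`, one of `w` and the subdivision vertices of `uw`, `wv`. These
`|A| - 1` vertices are pairwise non-adjacent.
-/

namespace SimpleGraph

variable {ι : Type*} {T : SimpleGraph ι} {x y z : ι} {S : Set ι}

def edgeSide (T : SimpleGraph ι) (x y : ι) : Set ι :=
  {z | (T.deleteEdges {s(x, y)}).Reachable y z}

theorem mem_edgeSide_iff : z ∈ T.edgeSide x y ↔ ∃ p : T.Walk y z, s(x, y) ∉ p.edges :=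
  reachable_deleteEdges_iff_exists_walk

theorem mem_edgeSide_self (x y : ι) : y ∈ T.edgeSide x y := Reachable.refl y

theorem mem_edgeSide_of_notMem_support (p : T.Walk y z) (hx : x ∉ p.support) :
    z ∈ T.edgeSide x y :=
  mem_edgeSide_iff.mpr ⟨p, fun h => hx (p.fst_mem_support_of_mem_edges h)⟩

theorem IsAcyclic.disjoint_edgeSide (hT : T.IsAcyclic) (hxy : T.Adj x y) :
    Disjoint (T.edgeSide x y) (T.edgeSide y x) := by
  refine Set.disjoint_left.mpr fun z hzy hzx => ?_
  have hbridge := isAcyclic_iff_forall_adj_isBridge.mp hT hxy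
  rw [isBridge_iff] at hbridge
  rw [edgeSide, Set.mem_ofPred_eq, Sym2.eq_swap] at hzx
  exact hbridge (hzx.trans hzy.symm)

theorem mem_edgeSide_or_of_walk {a b : ι} (p : T.Walk a b)
    (ha : a ∈ T.edgeSide x y ∨ a ∈ T.edgeSide y x) :
    b ∈ T.edgeSide x y ∨ b ∈ T.edgeSide y x := by
  induction p with
  | nil => exact ha
  | @cons a c b hac p ih =>
    refine ih ?_
    by_cases he : s(a, c) = s(x, y)
    · rcases Sym2.eq_iff.mp he with ⟨rfl, rfl⟩ | ⟨rfl, rfl⟩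
      · exact .inl (mem_edgeSide_self a c)
      · exact .inr (mem_edgeSide_self a c)
    · have hac' (u w : ι) (h : s(u, w) = s(x, y)) : (T.deleteEdges {s(u, w)}).Adj a c :=
        deleteEdges_adj.mpr ⟨hac, by rw [h]; exact he⟩
      exact ha.imp (fun h => h.trans (hac' x y rfl).reachable)
        (fun h => h.trans (hac' y x Sym2.eq_swap).reachable)

theorem Connected.mem_edgeSide_or (hT : T.Connected) (x y z : ι) :
    z ∈ T.edgeSide x y ∨ z ∈ T.edgeSide y x :=
  mem_edgeSide_or_of_walk (hT.preconnected y z).some (.inl (mem_edgeSide_self x y))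

theorem exists_walk_support_subset (hS : (T.induce S).Connected) {a b : ι} (ha : a ∈ S)
    (hb : b ∈ S) : ∃ p : T.Walk a b, ∀ c ∈ p.support, c ∈ S := by
  obtain ⟨q⟩ := hS.preconnected ⟨a, ha⟩ ⟨b, hb⟩
  refine ⟨q.map (Embedding.induce (G := T) S).toHom, fun c hc => ?_⟩
  replace hc : c ∈ q.support.map (Embedding.induce (G := T) S).toHom := by
    rw [← Walk.support_map]; exact hc
  obtain ⟨c', -, rfl⟩ := List.mem_map.mp hc
  exact c'.2

theorem IsAcyclic.mem_of_inter_edgeSide_nonempty (hT : T.IsAcyclic)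
    (hS : (T.induce S).Connected) (hxy : T.Adj x y) (hSy : (S ∩ T.edgeSide x y).Nonempty)
    (hSx : (S ∩ T.edgeSide y x).Nonempty) : x ∈ S ∧ y ∈ S := by
  obtain ⟨a, haS, ha⟩ := hSy
  obtain ⟨b, hbS, hb⟩ := hSx
  obtain ⟨r, hr⟩ := exists_walk_support_subset hS haS hbS
  by_cases he : s(x, y) ∈ r.edges
  · exact ⟨hr _ (r.fst_mem_support_of_mem_edges he), hr _ (r.snd_mem_support_of_mem_edges he)⟩
  · obtain ⟨p, hp⟩ := mem_edgeSide_iff.mp ha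
    have hb' : b ∈ T.edgeSide x y := by
      refine mem_edgeSide_iff.mpr ⟨p.append r, ?_⟩
      rw [Walk.edges_append, List.mem_append]
      exact fun h => h.elim hp he
    exact absurd hb (Set.disjoint_left.mp (hT.disjoint_edgeSide hxy) hb')

theorem IsTree.subset_edgeSide_or_subset_edgeSide_or_mem (hT : T.IsTree)
    (hS : (T.induce S).Connected) (hxy : T.Adj x y) :
    S ⊆ T.edgeSide x y ∨ S ⊆ T.edgeSide y x ∨ x ∈ S ∧ y ∈ S := by
  by_cases hSy : (S ∩ T.edgeSide x y).Nonempty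
  · by_cases hSx : (S ∩ T.edgeSide y x).Nonempty
    · exact .inr (.inr (hT.2.mem_of_inter_edgeSide_nonempty hS hxy hSy hSx))
    · exact .inl fun z hz =>
        (hT.1.mem_edgeSide_or x y z).resolve_right fun h => hSx ⟨z, hz, h⟩
  · exact .inr (.inl fun z hz =>
      (hT.1.mem_edgeSide_or x y z).resolve_left fun h => hSy ⟨z, hz, h⟩)

theorem Connected.exists_adj_subset_edgeSide (hT : T.Connected) (hS : (T.induce S).Connected)
    (hx : x ∉ S) : ∃ y, T.Adj x y ∧ S ⊆ T.edgeSide x y := by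
  classical
  obtain ⟨⟨a, haS⟩⟩ := hS.nonempty
  have hp := ((hT.preconnected x a).some.bypass_isPath)
  generalize (hT.preconnected x a).some.bypass = p at hp
  cases p with
  | nil => exact absurd haS hx
  | @cons _ y _ hxy q =>
    refine ⟨y, hxy, fun b hbS => ?_⟩
    obtain ⟨r, hr⟩ := exists_walk_support_subset hS haS hbS
    refine mem_edgeSide_of_notMem_support (q.append r) fun h => ?_
    rw [Walk.mem_support_append_iff] at h
    exact h.elim ((Walk.cons_isPath_iff _ _).mp hp).2 fun h => hx (hr x h)

noncomputable def setDist (T : SimpleGraph ι) (x : ι) (S : Set ι) : ℕ :=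
  sInf (T.dist x '' S)

theorem setDist_eq_zero_of_mem (hx : x ∈ S) : T.setDist x S = 0 :=
  Nat.le_zero.mp (Nat.sInf_le ⟨x, hx, dist_self⟩)

theorem IsTree.setDist_lt_of_subset_edgeSide (hT : T.IsTree) (hxy : T.Adj x y)
    (hS : S.Nonempty) (hSy : S ⊆ T.edgeSide x y) : T.setDist y S < T.setDist x S := by
  classical
  refine Nat.lt_of_succ_le (le_csInf (hS.image _) (Set.forall_mem_image.mpr fun a ha => ?_))
  obtain ⟨p, hp⟩ := hT.1.exists_walk_length_eq_dist x a
  have hyp : y ∈ p.support := by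
    by_contra hy
    exact Set.disjoint_left.mp (hT.2.disjoint_edgeSide hxy) (hSy ha)
      (mem_edgeSide_of_notMem_support p hy)
  calc T.setDist y S + 1 ≤ T.dist y a + 1 := Nat.succ_le_succ (Nat.sInf_le ⟨a, ha, rfl⟩)
    _ ≤ (p.dropUntil y hyp).length + 1 := Nat.succ_le_succ (dist_le _)
    _ ≤ T.dist x a := hp ▸ Walk.length_dropUntil_lt_length hyp hxy.ne'

/-- Helly property for subtrees of a tree. -/
theorem IsTree.exists_forall_mem_or_exists_edgeSide {κ : Type*} (hT : T.IsTree) (s : Finset κ)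
    (S : κ → Set ι) (hS : ∀ i, (T.induce (S i)).Connected) :
    (∃ x, ∀ i ∈ s, x ∈ S i) ∨
      ∃ x y, T.Adj x y ∧
        ∃ i ∈ s, ∃ j ∈ s, S i ⊆ T.edgeSide x y ∧ S j ⊆ T.edgeSide y x := by
  refine or_iff_not_imp_right.mpr fun hsep => ?_
  have := hT.1.nonempty
  -- a vertex minimising the total distance to the sets lies in all of them: were it to miss
  -- one, the step towards that set would decrease the total
  let x := Function.argmin fun x => ∑ i ∈ s, T.setDist x (S i)
  refine ⟨x, fun i hi => by_contra fun hxi => ?_⟩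
  obtain ⟨y, hxy, hiy⟩ := hT.1.exists_adj_subset_edgeSide (hS i) hxi
  have hmove : ∀ j ∈ s, S j ⊆ T.edgeSide x y ∨ x ∈ S j ∧ y ∈ S j := fun j hj =>
    (hT.subset_edgeSide_or_subset_edgeSide_or_mem (hS j) hxy).imp_right
      fun h => h.resolve_left fun hjx => hsep ⟨x, y, hxy, i, hi, j, hj, hiy, hjx⟩
  refine Function.not_lt_argmin (fun x => ∑ i ∈ s, T.setDist x (S i)) y
    (Finset.sum_lt_sum (fun j hj => ?_) ⟨i, hi, ?_⟩)
  · rcases hmove j hj with h | h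
    · exact (hT.setDist_lt_of_subset_edgeSide hxy (Set.nonempty_coe_sort.mp (hS j).nonempty) h).le
    · rw [setDist_eq_zero_of_mem h.2]; exact Nat.zero_le _
  · exact hT.setDist_lt_of_subset_edgeSide hxy (Set.nonempty_coe_sort.mp (hS i).nonempty) hiy

end SimpleGraph

namespace TreeDecomp

variable {V : Type} {G : SimpleGraph V} (D : TreeDecomp G)

def support (v : V) : Set D.ι := {t | v ∈ D.bag t}

theorem support_nonempty (v : V) : (D.support v).Nonempty :=
  Set.nonempty_coe_sort.mp (D.support_connected v).nonempty

theorem exists_mem_support_mem_bag_of_crossing {x y : D.ι} (hxy : D.tree.Adj x y) {a b : V}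
    (p : G.Walk a b) (ha : (D.support a ∩ D.tree.edgeSide x y).Nonempty)
    (hb : (D.support b ∩ D.tree.edgeSide y x).Nonempty) :
    ∃ c ∈ p.support, c ∈ D.bag x ∧ c ∈ D.bag y := by
  induction p with
  | nil =>
    exact ⟨_, Walk.start_mem_support _,
      D.isTree.2.mem_of_inter_edgeSide_nonempty (D.support_connected _) hxy ha hb⟩
  | @cons a c b hac p ih =>
    by_cases hax : (D.support a ∩ D.tree.edgeSide y x).Nonempty
    · exact ⟨a, Walk.start_mem_support _,
        D.isTree.2.mem_of_inter_edgeSide_nonempty (D.support_connected a) hxy ha hax⟩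
    · obtain ⟨t, hat, hct⟩ := D.covers_edge hac
      have ht : t ∈ D.tree.edgeSide x y :=
        (D.isTree.1.mem_edgeSide_or x y t).resolve_right fun h => hax ⟨t, hat, h⟩
      obtain ⟨d, hd, hdx⟩ := ih ⟨t, hct, ht⟩ hb
      exact ⟨d, List.mem_cons_of_mem _ hd, hdx⟩

end TreeDecomp

section IndepNum

variable {V : Type} {G : SimpleGraph V}

theorem card_le_indepNum {B t : Finset V} (htB : t ⊆ B) (ht : G.IsIndepSet ↑t) :
    t.card ≤ indepNum G ↑B := by
  refine le_csSup ⟨B.card, ?_⟩ ⟨t, by exact_mod_cast htB, ht, rfl⟩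
  rintro n ⟨t', ht', -, rfl⟩
  exact Finset.card_le_card (by exact_mod_cast ht')

theorem indepNum_le {s : Set V} {m : ℕ}
    (h : ∀ t : Finset V, ↑t ⊆ s → G.IsIndepSet ↑t → t.card ≤ m) :
    indepNum G s ≤ m :=
  csSup_le ⟨0, ∅, by simp⟩ fun _ ⟨t, hts, ht, hn⟩ => hn ▸ h t hts ht

variable [Fintype V]

theorem card_le_alpha {t : Finset V} (ht : G.IsIndepSet ↑t) : t.card ≤ alpha G := by
  simpa [alpha] using card_le_indepNum (B := Finset.univ) (Finset.subset_univ t) ht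

theorem exists_isIndepSet_card_eq_alpha (G : SimpleGraph V) :
    ∃ A : Finset V, G.IsIndepSet ↑A ∧ A.card = alpha G := by
  obtain ⟨A, -, hA, hcard⟩ := Nat.sSup_mem
    (s := {n | ∃ t : Finset V, (t : Set V) ⊆ Set.univ ∧ G.IsIndepSet ↑t ∧ t.card = n})
    ⟨0, ∅, by simp⟩ ⟨Fintype.card V, fun _ ⟨t, _, _, hn⟩ => hn ▸ t.card_le_univ⟩
  exact ⟨A, hA, hcard⟩

end IndepNum

section Completion

variable {V : Type}

abbrev NonEdge (H : SimpleGraph V) := {p : Sym2 V // ¬ p.IsDiag ∧ p ∉ H.edgeSet}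

variable {H : SimpleGraph V} {u v w a b : V}

@[simp] theorem completion_adj_inl_inl : (completion H).Adj (.inl u) (.inl v) ↔ H.Adj u v := by
  simp only [completion, fromRel_adj, ne_eq, Sum.inl.injEq]
  exact ⟨fun h => h.2.elim id (·.symm), fun h => ⟨h.ne, .inl h⟩⟩

@[simp] theorem completion_adj_inl_inr {q : NonEdge H} :
    (completion H).Adj (.inl u) (.inr q) ↔ u ∈ q.1 := by
  simp [completion]

@[simp] theorem completion_adj_inr_inl {q : NonEdge H} :
    (completion H).Adj (.inr q) (.inl u) ↔ u ∈ q.1 := by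
  simp [completion]

@[simp] theorem completion_not_adj_inr_inr {q q' : NonEdge H} :
    ¬(completion H).Adj (.inr q) (.inr q') := by
  simp [completion]

theorem isIndepSet_image_inl_iff {s : Set V} :
    (completion H).IsIndepSet (Sum.inl '' s) ↔ H.IsIndepSet s := by
  rw [IsIndepSet, Sum.inl_injective.injOn.pairwise_image]
  simp only [Set.Pairwise, Function.onFun, completion_adj_inl_inl, IsIndepSet]

def nonEdge (hab : a ≠ b) (h : ¬H.Adj a b) : NonEdge H := ⟨s(a, b), by simpa using hab, h⟩

def nonEdgeWalk (hab : a ≠ b) (h : ¬H.Adj a b) : (completion H).Walk (.inl a) (.inl b) :=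
  .cons (completion_adj_inl_inr (q := nonEdge hab h).mpr (Sym2.mem_mk_left a b))
    (.cons (completion_adj_inr_inl (q := nonEdge hab h).mpr (Sym2.mem_mk_right a b)) .nil)

@[simp] theorem support_nonEdgeWalk (hab : a ≠ b) (h : ¬H.Adj a b) :
    (nonEdgeWalk hab h).support = [.inl a, .inr (nonEdge hab h), .inl b] := rfl

/-- `c` is an inner vertex of the path `u, s(u,w), w, s(w,v), v` of `completion H`, where the
subdivision vertices are named after the non-edges they subdivide. -/
def OnPathVia (u v w : V) : V ⊕ NonEdge H → Prop
  | .inl a => a = w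
  | .inr p => p.1 = s(u, w) ∨ p.1 = s(w, v)

theorem exists_walk_forall_onPathVia (huv : u ≠ v) (hwv : w ≠ v) (huv' : ¬H.Adj u v)
    (huw : ¬H.Adj u w) (hwv' : ¬H.Adj w v) :
    ∃ p : (completion H).Walk (.inl u) (.inl v),
      ∀ c ∈ p.support, c = .inl u ∨ c = .inl v ∨ OnPathVia u v w c := by
  by_cases hwu : w = u
  · subst hwu
    refine ⟨nonEdgeWalk huv huv', ?_⟩
    simp [OnPathVia, nonEdge]
  · refine ⟨(nonEdgeWalk (Ne.symm hwu) huw).append (nonEdgeWalk hwv hwv'), ?_⟩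
    simp only [Walk.mem_support_append_iff, support_nonEdgeWalk, List.mem_cons,
      List.not_mem_nil, or_false]
    rintro c ((rfl | rfl | rfl) | rfl | rfl | rfl) <;> simp [OnPathVia, nonEdge]

theorem OnPathVia.ne_and_not_adj {w' : V} {c c' : V ⊕ NonEdge H} (hwv : w ≠ v)
    (hw'v : w' ≠ v) (hww' : w ≠ w') (hadj : ¬H.Adj w w') (hc : OnPathVia u v w c)
    (hc' : OnPathVia u v w' c') (hcu : c ≠ .inl u) (hc'u : c' ≠ .inl u) :
    c ≠ c' ∧ ¬(completion H).Adj c c' := by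
  rcases c with a | p <;> rcases c' with a' | p' <;> simp only [OnPathVia] at hc hc'
  · subst hc hc'
    simpa using ⟨hww', hadj⟩
  · subst hc
    have hau : a ≠ u := fun h => hcu (by rw [h])
    rcases hc' with h | h <;> simp [h] <;> grind
  · subst hc'
    have ha'u : a' ≠ u := fun h => hc'u (by rw [h])
    rcases hc with h | h <;> simp [h] <;> grind
  · refine ⟨fun h => ?_, completion_not_adj_inr_inr⟩
    rw [Sum.inr_injective.eq_iff, Subtype.ext_iff] at h
    rcases hc with hp | hp <;> rcases hc' with hp' | hp' <;>
      rw [hp, hp', Sym2.eq_iff] at h <;> grind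

end Completion

theorem connected_induce_starGraph {ι : Type*} {r : ι} {S : Set ι} (hr : r ∈ S) :
    ((starGraph r).induce S).Connected :=
  .of_isUniversal (v := ⟨r, hr⟩) fun _ hc =>
    starGraph_center_adj (fun h => hc (Subtype.ext h))

section Star

variable {V : Type} [Fintype V] {H : SimpleGraph V}

open Classical in
noncomputable def starBag (H : SimpleGraph V) : Option (NonEdge H) → Finset (V ⊕ NonEdge H)
  | none => Finset.univ.disjSum ∅
  | some q => (Finset.univ.filter (· ∈ q.1)).disjSum {q}

noncomputable def starDecomp (H : SimpleGraph V) : TreeDecomp (completion H) where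
  ι := Option (NonEdge H)
  tree := starGraph none
  isTree := isTree_starGraph none
  bag := starBag H
  covers_edge := by
    rintro (u | q) (u' | q') h
    · exact ⟨none, by simp [starBag]⟩
    · exact ⟨some q', by simpa [starBag] using h⟩
    · exact ⟨some q, by simpa [starBag] using h⟩
    · exact absurd h completion_not_adj_inr_inr
  support_connected := by
    rintro (u | q)
    · exact connected_induce_starGraph (by simp [starBag])
    · have : {t | Sum.inr q ∈ starBag H t} = {some q} := by
        ext (_ | _) <;> simp [starBag, eq_comm]
      rw [this]
      exact .of_subsingleton

theorem card_le_alpha_of_subset_range_inl {t : Finset (V ⊕ NonEdge H)}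
    (hinl : (t : Set (V ⊕ NonEdge H)) ⊆ Set.range Sum.inl)
    (ht : (completion H).IsIndepSet ↑t) : t.card ≤ alpha H := by
  let t' := t.preimage Sum.inl Sum.inl_injective.injOn
  have himage : Sum.inl '' ↑t' ⊆ (↑t : Set (V ⊕ NonEdge H)) := by
    rw [Finset.coe_preimage]
    exact Set.image_preimage_subset _ _
  calc t.card ≤ t'.card := Finset.card_le_card_of_surjOn Sum.inl fun c hc => by
        obtain ⟨a, rfl⟩ := hinl hc
        exact ⟨a, by simpa [t'] using hc, rfl⟩
    _ ≤ alpha H := card_le_alpha (isIndepSet_image_inl_iff.mp (ht.mono himage))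

theorem indepNum_starBag_le (t : Option (NonEdge H)) :
    indepNum (completion H) ↑(starBag H t) ≤ alpha H := by
  refine indepNum_le fun s hs hind => ?_
  rcases t with _ | q
  · exact card_le_alpha_of_subset_range_inl (by simpa [starBag] using hs) hind
  by_cases hq : Sum.inr q ∈ s
  · have hsq : s ⊆ {Sum.inr q} := by
      intro c hc
      obtain ⟨a, ha, rfl⟩ | ⟨q', hq', rfl⟩ := Finset.mem_disjSum.mp (hs hc)
      · exact absurd (completion_adj_inl_inr.mpr (by simpa using ha))
          (hind hc hq Sum.inl_ne_inr)
      · simpa using hq'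
    calc s.card ≤ 1 := (Finset.card_le_card hsq).trans_eq (Finset.card_singleton _)
      _ ≤ alpha H := card_le_alpha (t := {q.1.out.1}) (by simp)
  · refine card_le_alpha_of_subset_range_inl (fun c hc => ?_) hind
    obtain ⟨a, -, rfl⟩ | ⟨q', hq', rfl⟩ := Finset.mem_disjSum.mp (hs hc)
    · exact ⟨a, rfl⟩
    · rw [Finset.mem_singleton.mp hq'] at hc
      exact absurd hc hq

theorem treeAlpha_completion_le_alpha (H : SimpleGraph V) :
    treeAlpha (completion H) ≤ alpha H :=
  Nat.sInf_le ⟨starDecomp H, indepNum_starBag_le⟩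

end Star

section LowerBound

variable {V : Type} {H : SimpleGraph V}

theorem exists_mem_bag_onPathVia (D : TreeDecomp (completion H)) {A : Finset V}
    (hA : H.IsIndepSet ↑A) {x y : D.ι} (hxy : D.tree.Adj x y) {u v w : V} (hu : u ∈ A)
    (hv : v ∈ A) (hw : w ∈ A) (hwv : w ≠ v) (hux : D.support (.inl u) ⊆ D.tree.edgeSide x y)
    (hvy : D.support (.inl v) ⊆ D.tree.edgeSide y x) :
    ∃ c ∈ D.bag x, c ≠ .inl u ∧ OnPathVia u v w c := by
  have hsides := D.isTree.2.disjoint_edgeSide hxy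
  obtain ⟨tu, htu⟩ := D.support_nonempty (.inl u)
  obtain ⟨tv, htv⟩ := D.support_nonempty (.inl v)
  have huv : u ≠ v := by
    rintro rfl
    exact Set.disjoint_left.mp hsides (hux htu) (hvy htu)
  have hnadj : ∀ a ∈ A, ∀ b ∈ A, ¬H.Adj a b := fun a ha b hb h => hA ha hb h.ne h
  obtain ⟨p, hp⟩ := exists_walk_forall_onPathVia huv hwv (hnadj u hu v hv) (hnadj u hu w hw)
    (hnadj w hw v hv)
  obtain ⟨c, hc, hcx, hcy⟩ := D.exists_mem_support_mem_bag_of_crossing hxy p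
    ⟨tu, htu, hux htu⟩ ⟨tv, htv, hvy htv⟩
  have hcu : c ≠ .inl u := by
    rintro rfl
    exact Set.disjoint_left.mp hsides (hux hcx) (mem_edgeSide_self y x)
  have hcv : c ≠ .inl v := by
    rintro rfl
    exact Set.disjoint_left.mp hsides (mem_edgeSide_self x y) (hvy hcy)
  exact ⟨c, hcx, hcu, ((hp c hc).resolve_left hcu).resolve_left hcv⟩

theorem card_sub_one_le_indepNum_bag_of_subset_edgeSide (D : TreeDecomp (completion H))
    {A : Finset V} (hA : H.IsIndepSet ↑A) {x y : D.ι} (hxy : D.tree.Adj x y) {u v : V}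
    (hu : u ∈ A) (hv : v ∈ A) (hux : D.support (.inl u) ⊆ D.tree.edgeSide x y)
    (hvy : D.support (.inl v) ⊆ D.tree.edgeSide y x) :
    A.card - 1 ≤ indepNum (completion H) ↑(D.bag x) := by
  classical
  choose! f hf using fun w (hw : w ∈ A.erase v) =>
    exists_mem_bag_onPathVia D hA hxy hu hv (Finset.mem_of_mem_erase hw)
      (Finset.ne_of_mem_erase hw) hux hvy
  have hsep : ∀ w ∈ A.erase v, ∀ w' ∈ A.erase v, w ≠ w' →
      f w ≠ f w' ∧ ¬(completion H).Adj (f w) (f w') := by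
    intro w hw w' hw' hww'
    obtain ⟨-, hfwu, hfw⟩ := hf w hw
    obtain ⟨-, hfw'u, hfw'⟩ := hf w' hw'
    exact hfw.ne_and_not_adj (Finset.ne_of_mem_erase hw) (Finset.ne_of_mem_erase hw') hww'
      (hA (Finset.mem_of_mem_erase hw) (Finset.mem_of_mem_erase hw') hww') hfw' hfwu hfw'u
  calc A.card - 1 = ((A.erase v).image f).card := by
        rw [Finset.card_image_of_injOn fun w hw w' hw' h =>
          by_contra fun hne => (hsep w hw w' hw' hne).1 h, Finset.card_erase_of_mem hv]
    _ ≤ indepNum (completion H) ↑(D.bag x) := by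
        refine card_le_indepNum (fun c hc => ?_) ?_
        · obtain ⟨w, hw, rfl⟩ := Finset.mem_image.mp hc
          exact (hf w hw).1
        · rw [Finset.coe_image]
          rintro _ ⟨w, hw, rfl⟩ _ ⟨w', hw', rfl⟩ hne
          exact (hsep w hw w' hw' fun h => hne (h ▸ rfl)).2

theorem exists_alpha_sub_one_le_indepNum_bag [Fintype V] (D : TreeDecomp (completion H)) :
    ∃ x, alpha H - 1 ≤ indepNum (completion H) ↑(D.bag x) := by
  obtain ⟨A, hA, hcard⟩ := exists_isIndepSet_card_eq_alpha H
  rw [← hcard]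
  rcases D.isTree.exists_forall_mem_or_exists_edgeSide A (fun a => D.support (.inl a))
    (fun a => D.support_connected _) with ⟨x, hx⟩ | ⟨x, y, hxy, u, hu, v, hv, hux, hvy⟩
  · refine ⟨x, (Nat.sub_le _ _).trans ?_⟩
    calc A.card = (A.map .inl).card := (Finset.card_map _).symm
      _ ≤ indepNum (completion H) ↑(D.bag x) := by
        refine card_le_indepNum (fun c hc => ?_) ?_
        · obtain ⟨a, ha, rfl⟩ := Finset.mem_map.mp hc
          exact hx a ha
        · rw [Finset.coe_map]
          exact isIndepSet_image_inl_iff.mpr hA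
  · exact ⟨x, card_sub_one_le_indepNum_bag_of_subset_edgeSide D hA hxy hu hv hux hvy⟩

theorem alpha_sub_one_le_treeAlpha_completion [Fintype V] (H : SimpleGraph V) :
    alpha H - 1 ≤ treeAlpha (completion H) := by
  refine le_csInf ⟨alpha H, starDecomp H, indepNum_starBag_le⟩ ?_
  rintro k ⟨D, hD⟩
  obtain ⟨x, hx⟩ := exists_alpha_sub_one_le_indepNum_bag D
  exact hx.trans (hD x)

end LowerBound

theorem stmt10_general {V : Type} [Fintype V] (H : SimpleGraph V) :
    alpha H - 1 ≤ treeAlpha (completion H) ∧ treeAlpha (completion H) ≤ alpha H :=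
  ⟨alpha_sub_one_le_treeAlpha_completion H, treeAlpha_completion_le_alpha H⟩

theorem stmt10 {V : Type} [Fintype V] (H : SimpleGraph V) (hV : 3 ≤ Fintype.card V) :
    alpha H - 1 ≤ treeAlpha (completion H) ∧ treeAlpha (completion H) ≤ alpha H :=
  stmt10_general H
end
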